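/- Let X have a bivariate elliptical distribution F ∈ E_2(μ,V) on ℝ², and let V = U Λ U^T be an eigenvalue decomposition of V with U orthogonal and Λ = diag(λ_1,λ_2), 0 < λ_2 ≤ λ_1. Then the spatial sign covariance matrix satisfies S(F) = U Δ U^T with Δ = diag(δ_1,δ_2), where δ_j = √λ_j/(√λ_1 + √λ_2) for j = 1,2. -/

import Mathlib

open MeasureTheory Matrix Real

/-- The spatial sign s(x) = x/‖x‖ for x ≠ 0, and s(0) = 0. -/
noncomputable def ssign {p : ℕ} (x : EuclideanSpace ℝ (Fin p)) : EuclideanSpace ℝ (Fin p) :=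
  haveI := Classical.propDecidable (x = 0)
  if x = 0 then 0 else ‖x‖⁻¹ • x

/-!
Write `V = A Aᵀ` with `A = U D`, `D = diag(p, q)`, `p = √λ₁`, `q = √λ₂`. The density of `F` is
invariant under the area-preserving maps `x ↦ μ + A R_t A⁻¹ (x - μ)`, `R_t` the rotation by `t`,
so by Fubini each entry of `S(F)` equals its average over these maps for `t ∈ (-π, π]`. For
`x ≠ μ` the orbit is `μ + r A u(t + φ)` with `u(t) = (cos t, sin t)`, so that average does not
depend on `x`: it is `U M Uᵀ`, with `M` the average of `(D u(t)) (D u(t))ᵀ / |D u(t)|²`. The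
diagonal entries of `M` are the elementary integrals
`(2π)⁻¹ ∫ p² cos² t / (p² cos² t + q² sin² t) dt = p / (p + q)`, and its off-diagonal entries
vanish by oddness.
-/

lemma ssign_eq_inv_norm_smul {p : ℕ} (x : EuclideanSpace ℝ (Fin p)) : ssign x = ‖x‖⁻¹ • x := by
  by_cases hx : x = 0 <;> simp [ssign, hx]

lemma ssign_smul_of_pos {p : ℕ} {r : ℝ} (hr : 0 < r) (x : EuclideanSpace ℝ (Fin p)) :
    ssign (r • x) = ssign x := by
  rw [ssign_eq_inv_norm_smul, ssign_eq_inv_norm_smul, norm_smul, Real.norm_of_nonneg hr.le,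
    smul_smul, _root_.mul_inv_rev, mul_assoc, inv_mul_cancel₀ hr.ne', mul_one]

lemma measurable_ssign {p : ℕ} : Measurable (ssign : EuclideanSpace ℝ (Fin p) → _) := by
  rw [show (ssign : EuclideanSpace ℝ (Fin p) → _) = fun x => ‖x‖⁻¹ • x from
    funext ssign_eq_inv_norm_smul]
  fun_prop

lemma abs_ssign_apply_le_one {p : ℕ} (x : EuclideanSpace ℝ (Fin p)) (i : Fin p) :
    |ssign x i| ≤ 1 := by
  rw [ssign_eq_inv_norm_smul, PiLp.smul_apply, smul_eq_mul, abs_mul, abs_inv, abs_norm]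
  exact inv_mul_le_one_of_le₀ (PiLp.norm_apply_le x i) (norm_nonneg x)

lemma ssign_apply_mul_ssign_apply {p : ℕ} (x : EuclideanSpace ℝ (Fin p)) (i j : Fin p) :
    ssign x i * ssign x j = x i * x j / ‖x‖ ^ 2 := by
  rw [ssign_eq_inv_norm_smul, PiLp.smul_apply, PiLp.smul_apply, smul_eq_mul, smul_eq_mul]
  ring

lemma MeasurableEmbedding.map_withDensity_eq_self {α : Type*} [MeasurableSpace α]
    {μ : Measure α} {f : α → α} (hf : MeasurableEmbedding f) (hμ : μ.map f = μ)
    {h : α → ENNReal} (hh : ∀ x, h (f x) = h x) :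
    (μ.withDensity h).map f = μ.withDensity h := by
  ext s hs
  rw [Measure.map_apply hf.measurable hs, withDensity_apply _ (hf.measurable hs),
    withDensity_apply _ hs]
  conv_rhs => rw [← hμ, Measure.restrict_map hf.measurable hs, hf.lintegral_map]
  simp only [hh]

lemma integral_eq_of_map_eq_of_ae_integral_eq {Θ E : Type*} [MeasurableSpace Θ]
    [MeasurableSpace E] {m : Measure Θ} [IsFiniteMeasure m] {ν : Measure E}
    [IsProbabilityMeasure ν] {T : Θ → E → E} (hT : ∀ θ, Measurable (T θ))
    (hν : ∀ θ, ν.map (T θ) = ν) {G : E → ℝ} (hG : Measurable G)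
    (hGT : Measurable fun z : Θ × E => G (T z.1 z.2)) {C : ℝ} (hC : ∀ x, |G x| ≤ C)
    {c : ℝ} (hm : m.real Set.univ ≠ 0)
    (havg : ∀ᵐ x ∂ν, ∫ θ, G (T θ x) ∂m = m.real Set.univ * c) :
    ∫ x, G x ∂ν = c := by
  have hint : Integrable (Function.uncurry fun θ x => G (T θ x)) (m.prod ν) :=
    (integrable_const C).mono' hGT.aestronglyMeasurable (ae_of_all _ fun z => hC _)
  have hinv : ∀ θ, ∫ x, G (T θ x) ∂ν = ∫ x, G x ∂ν := fun θ => by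
    rw [← integral_map (hT θ).aemeasurable hG.aestronglyMeasurable, hν]
  have key : m.real Set.univ * ∫ x, G x ∂ν = m.real Set.univ * c := calc
    m.real Set.univ * ∫ x, G x ∂ν = ∫ θ, ∫ x, G (T θ x) ∂ν ∂m := by
      simp [hinv, integral_const, smul_eq_mul]
    _ = ∫ x, ∫ θ, G (T θ x) ∂m ∂ν := integral_integral_swap hint
    _ = m.real Set.univ * c := by simp [integral_congr_ae havg]
  exact mul_left_cancel₀ hm key

lemma abs_det_of_transpose_mul_self {n : Type*} [Fintype n] [DecidableEq n]
    {R : Matrix n n ℝ} (hR : Rᵀ * R = 1) : |R.det| = 1 := by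
  have h := congrArg det hR
  rw [det_mul, det_transpose, det_one, ← sq, ← sq_abs] at h
  exact (pow_eq_one_iff_of_nonneg (abs_nonneg _) two_ne_zero).mp h

lemma sum_sum_mulVec_mul_mulVec {n : Type*} [Fintype n] [DecidableEq n] (W M : Matrix n n ℝ)
    (x : n → ℝ) :
    ∑ i, ∑ j, (M *ᵥ x) i * W i j * (M *ᵥ x) j = ∑ i, ∑ j, x i * (Mᵀ * W * M) i j * x j := by
  rw [← Matrix.toBilin'_apply, ← Matrix.toBilin'_apply, ← Matrix.toBilin'_comp]
  rfl

lemma transpose_conj_mul_inv_mul_conj {n : Type*} [Fintype n] [DecidableEq n]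
    {A R : Matrix n n ℝ} (hA : IsUnit A.det) (hR : Rᵀ * R = 1) :
    (A * R * A⁻¹)ᵀ * (A * Aᵀ)⁻¹ * (A * R * A⁻¹) = (A * Aᵀ)⁻¹ := by
  have hAT : IsUnit Aᵀ.det := by rwa [det_transpose]
  rw [Matrix.mul_inv_rev, transpose_mul, transpose_mul, transpose_nonsing_inv]
  simp only [Matrix.mul_assoc]
  rw [mul_nonsing_inv_cancel_left _ _ hAT, nonsing_inv_mul_cancel_left _ _ hA,
    ← Matrix.mul_assoc Rᵀ, hR, Matrix.one_mul]

lemma isUnit_det_mul_diagonal {n : Type*} [Fintype n] [DecidableEq n] {U : Matrix n n ℝ}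
    (hU : Uᵀ * U = 1) {d : n → ℝ} (hd : ∀ k, d k ≠ 0) : IsUnit (U * diagonal d).det := by
  rw [isUnit_iff_ne_zero, det_mul, det_diagonal]
  refine mul_ne_zero (fun h => ?_) (Finset.prod_ne_zero_iff.mpr fun k _ => hd k)
  simpa [h] using congrArg det hU

lemma measurePreserving_toEuclideanLin {n : ℕ} {M : Matrix (Fin n) (Fin n) ℝ}
    (hM : |M.det| = 1) : MeasurePreserving (toEuclideanLin M) volume volume := by
  have hdet : LinearMap.det (toEuclideanLin M) = M.det := by
    rw [toEuclideanLin_eq_toLin_orthonormal, LinearMap.det_toLin]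
  have hM0 : M.det ≠ 0 := fun h => by simp [h] at hM
  refine ⟨(toEuclideanLin M).continuous_of_finiteDimensional.measurable, ?_⟩
  rw [Measure.map_linearMap_addHaar_eq_smul_addHaar _ (hdet ▸ hM0), hdet, abs_inv, hM]
  simp

lemma measurableEmbedding_toEuclideanLin {n : ℕ} {M : Matrix (Fin n) (Fin n) ℝ}
    (hM : IsUnit M.det) : MeasurableEmbedding (toEuclideanLin M) := by
  refine (LinearMap.isClosedEmbedding_of_injective ?_).measurableEmbedding
  rw [LinearMap.ker_eq_bot]
  intro x y h
  exact WithLp.ofLp_injective 2 <| (mulVec_injective_iff_isUnit.mpr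
    ((isUnit_iff_isUnit_det M).mpr hM)) (congrArg WithLp.ofLp h)

lemma map_withDensity_quadForm_conj {n : ℕ} (μ : EuclideanSpace ℝ (Fin n))
    {A R : Matrix (Fin n) (Fin n) ℝ} (hA : IsUnit A.det) (hR : Rᵀ * R = 1) (φ : ℝ → ENNReal) :
    (volume.withDensity fun x => φ (∑ i, ∑ j, (x i - μ i) * (A * Aᵀ)⁻¹ i j * (x j - μ j))).map
        (fun x => μ + toEuclideanLin (A * R * A⁻¹) (x - μ))
      = volume.withDensity fun x => φ (∑ i, ∑ j, (x i - μ i) * (A * Aᵀ)⁻¹ i j * (x j - μ j)) := by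
  have hdet : |(A * R * A⁻¹).det| = 1 := by
    rw [det_conj ((isUnit_iff_isUnit_det A).mpr hA), abs_det_of_transpose_mul_self hR]
  have hunit : IsUnit (A * R * A⁻¹).det := isUnit_iff_ne_zero.mpr fun h => by simp [h] at hdet
  refine MeasurableEmbedding.map_withDensity_eq_self ((measurableEmbedding_addLeft μ).comp
    ((measurableEmbedding_toEuclideanLin hunit).comp (measurableEmbedding_subRight μ)))
    ((measurePreserving_add_left volume μ).comp ((measurePreserving_toEuclideanLin hdet).comp
      (measurePreserving_sub_right volume μ))).map_eq fun x => ?_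
  have hsum := sum_sum_mulVec_mul_mulVec (A * Aᵀ)⁻¹ (A * R * A⁻¹) (WithLp.ofLp (x - μ))
  rw [transpose_conj_mul_inv_mul_conj hA hR] at hsum
  simpa [toLpLin_apply, Matrix.mul_assoc] using congrArg φ hsum

lemma mul_cos_sq_add_mul_sin_sq_pos {a b : ℝ} (ha : 0 < a) (hb : 0 < b) (t : ℝ) :
    0 < a * cos t ^ 2 + b * sin t ^ 2 := by
  nlinarith [sin_sq_add_cos_sq t, mul_nonneg ha.le (sq_nonneg (cos t)),
    mul_nonneg hb.le (sq_nonneg (sin t)), mul_pos ha hb]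

/-- `t + arctan (…)` is a continuous branch of the polar angle of `(p cos t, q sin t)`. -/
lemma hasDerivAt_ellipse_angle {p q : ℝ} (hp : 0 < p) (hq : 0 < q) (t : ℝ) :
    HasDerivAt (fun t => t + arctan ((q - p) * (sin t * cos t) / (p * cos t ^ 2 + q * sin t ^ 2)))
      (p * q / (p ^ 2 * cos t ^ 2 + q ^ 2 * sin t ^ 2)) t := by
  have hP := mul_cos_sq_add_mul_sin_sq_pos hp hq t
  have hN : HasDerivAt (fun t => (q - p) * (sin t * cos t))
      ((q - p) * (cos t * cos t + sin t * -sin t)) t :=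
    ((hasDerivAt_sin t).mul (hasDerivAt_cos t)).const_mul _
  have hPd : HasDerivAt (fun t => p * cos t ^ 2 + q * sin t ^ 2)
      (p * (2 * cos t * -sin t) + q * (2 * sin t * cos t)) t :=
    ((((hasDerivAt_cos t).pow 2).const_mul p).add
      (((hasDerivAt_sin t).pow 2).const_mul q)).congr_deriv (by ring)
  refine ((hasDerivAt_id t).add (HasDerivAt.arctan (hN.div hPd hP.ne'))).congr_deriv ?_
  have hD := mul_cos_sq_add_mul_sin_sq_pos (pow_pos hp 2) (pow_pos hq 2) t
  have hsc := cos_sq_add_sin_sq t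
  simp only [Pi.div_apply]
  generalize cos t = c, sin t = s at *
  field_simp
  linear_combination (p * q * (p ^ 2 * c ^ 2 + q ^ 2 * s ^ 2) * (c ^ 2 + s ^ 2)) * hsc

lemma continuous_div_ellipse {p q : ℝ} (hp : 0 < p) (hq : 0 < q) {f : ℝ → ℝ}
    (hf : Continuous f) :
    Continuous fun t => f t / (p ^ 2 * cos t ^ 2 + q ^ 2 * sin t ^ 2) :=
  hf.div (by fun_prop) fun t =>
    (mul_cos_sq_add_mul_sin_sq_pos (pow_pos hp 2) (pow_pos hq 2) t).ne'

lemma integral_mul_div_ellipse {p q : ℝ} (hp : 0 < p) (hq : 0 < q) :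
    ∫ t in (-π)..π, p * q / (p ^ 2 * cos t ^ 2 + q ^ 2 * sin t ^ 2) = 2 * π := by
  rw [intervalIntegral.integral_eq_sub_of_hasDerivAt (fun t _ => hasDerivAt_ellipse_angle hp hq t)
    ((continuous_div_ellipse hp hq continuous_const).intervalIntegrable _ _)]
  simp
  ring

lemma integral_sq_cos_div_ellipse {p q : ℝ} (hp : 0 < p) (hq : 0 < q) :
    ∫ t in (-π)..π, p ^ 2 * cos t ^ 2 / (p ^ 2 * cos t ^ 2 + q ^ 2 * sin t ^ 2)
      = 2 * π * p / (p + q) := by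
  rcases eq_or_ne p q with rfl | hpq
  · have hcos : ∀ t, p ^ 2 * cos t ^ 2 / (p ^ 2 * cos t ^ 2 + p ^ 2 * sin t ^ 2) = cos t ^ 2 :=
      fun t => by rw [← mul_add, cos_sq_add_sin_sq, mul_one, mul_div_cancel_left₀ _ (by positivity)]
    simp only [hcos, integral_cos_sq, cos_neg, sin_neg, sin_pi]
    field_simp
    ring
  · have hsub : p ^ 2 - q ^ 2 ≠ 0 := by
      rw [sq_sub_sq]; exact mul_ne_zero (by positivity) (sub_ne_zero.mpr hpq)
    have hlin : ∀ t, (p ^ 2 - q ^ 2) * (p ^ 2 * cos t ^ 2 / (p ^ 2 * cos t ^ 2 + q ^ 2 * sin t ^ 2))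
        = p ^ 2 - p * q * (p * q / (p ^ 2 * cos t ^ 2 + q ^ 2 * sin t ^ 2)) := fun t => by
      have hD := mul_cos_sq_add_mul_sin_sq_pos (pow_pos hp 2) (pow_pos hq 2) t
      field_simp
      linear_combination (-q ^ 2) * sin_sq_add_cos_sq t
    apply mul_left_cancel₀ hsub
    rw [← intervalIntegral.integral_const_mul]
    simp only [hlin]
    rw [intervalIntegral.integral_sub intervalIntegrable_const
      (((continuous_div_ellipse hp hq continuous_const).intervalIntegrable _ _).const_mul (p * q)),
      intervalIntegral.integral_const, intervalIntegral.integral_const_mul,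
      integral_mul_div_ellipse hp hq, smul_eq_mul, sq_sub_sq]
    field_simp
    ring

lemma integral_sq_sin_div_ellipse {p q : ℝ} (hp : 0 < p) (hq : 0 < q) :
    ∫ t in (-π)..π, q ^ 2 * sin t ^ 2 / (p ^ 2 * cos t ^ 2 + q ^ 2 * sin t ^ 2)
      = 2 * π * q / (p + q) := by
  have hcompl : ∀ t, q ^ 2 * sin t ^ 2 / (p ^ 2 * cos t ^ 2 + q ^ 2 * sin t ^ 2)
      = 1 - p ^ 2 * cos t ^ 2 / (p ^ 2 * cos t ^ 2 + q ^ 2 * sin t ^ 2) := fun t => by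
    have hD := mul_cos_sq_add_mul_sin_sq_pos (pow_pos hp 2) (pow_pos hq 2) t
    field_simp
    ring
  simp only [hcompl]
  rw [intervalIntegral.integral_sub intervalIntegrable_const
    ((continuous_div_ellipse hp hq (by fun_prop)).intervalIntegrable _ _),
    intervalIntegral.integral_const, integral_sq_cos_div_ellipse hp hq, smul_eq_mul]
  field_simp
  ring

lemma integral_cos_mul_sin_div_ellipse (p q : ℝ) :
    ∫ t in (-π)..π, p * cos t * (q * sin t) / (p ^ 2 * cos t ^ 2 + q ^ 2 * sin t ^ 2) = 0 := by
  have hodd := intervalIntegral.integral_comp_neg (a := -π) (b := π)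
    fun t => p * cos t * (q * sin t) / (p ^ 2 * cos t ^ 2 + q ^ 2 * sin t ^ 2)
  simp only [cos_neg, sin_neg, neg_neg, neg_sq, mul_neg, neg_div,
    intervalIntegral.integral_neg] at hodd
  linarith

lemma ssign_apply_mul_ssign_apply_mulVec_of_orthogonal {n : ℕ} {U : Matrix (Fin n) (Fin n) ℝ}
    (hU : Uᵀ * U = 1) (v : Fin n → ℝ) (i j : Fin n) :
    ssign (WithLp.toLp 2 (U *ᵥ v)) i * ssign (WithLp.toLp 2 (U *ᵥ v)) j
      = ∑ k, ∑ l, U i k * U j l * (v k * v l / (v ⬝ᵥ v)) := by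
  have hnorm : ‖WithLp.toLp 2 (U *ᵥ v)‖ ^ 2 = v ⬝ᵥ v := by
    rw [EuclideanSpace.real_norm_sq_eq]
    simp only [sq]
    rw [← dotProduct, dotProduct_mulVec, ← vecMul_transpose, vecMul_vecMul, hU, vecMul_one]
  rw [ssign_apply_mul_ssign_apply, hnorm, WithLp.ofLp_toLp]
  simp only [mulVec, dotProduct, Finset.sum_mul_sum, Finset.sum_div]
  refine Finset.sum_congr rfl fun k _ => Finset.sum_congr rfl fun l _ => ?_
  ring

lemma integral_ellipse_entry {p q : ℝ} (hp : 0 < p) (hq : 0 < q) (k l : Fin 2) :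
    ∫ t in (-π)..π, ![p * cos t, q * sin t] k * ![p * cos t, q * sin t] l
        / (p ^ 2 * cos t ^ 2 + q ^ 2 * sin t ^ 2)
      = 2 * π * diagonal ![p / (p + q), q / (p + q)] k l := by
  fin_cases k <;> fin_cases l
  · simpa [← sq, mul_pow, mul_div_assoc] using integral_sq_cos_div_ellipse hp hq
  · simpa using integral_cos_mul_sin_div_ellipse p q
  · simpa [mul_comm] using integral_cos_mul_sin_div_ellipse p q
  · simpa [← sq, mul_pow, mul_div_assoc] using integral_sq_sin_div_ellipse hp hq

lemma integral_ssign_mul_ssign_ellipse {U : Matrix (Fin 2) (Fin 2) ℝ} (hU : Uᵀ * U = 1)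
    {d : Fin 2 → ℝ} (hd : ∀ k, 0 < d k) (i j : Fin 2) :
    ∫ t in (-π)..π, ssign (WithLp.toLp 2 ((U * diagonal d) *ᵥ ![cos t, sin t])) i
        * ssign (WithLp.toLp 2 ((U * diagonal d) *ᵥ ![cos t, sin t])) j
      = 2 * π * (U * diagonal (fun k => d k / (d 0 + d 1)) * Uᵀ) i j := by
  set w : ℝ → Fin 2 → ℝ := fun t => ![d 0 * cos t, d 1 * sin t]
  have hw : ∀ t, (U * diagonal d) *ᵥ ![cos t, sin t] = U *ᵥ w t := fun t => by
    rw [← mulVec_mulVec]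
    congr 1
    ext k; fin_cases k <;> simp [w, mulVec_diagonal]
  have hww : ∀ t, w t ⬝ᵥ w t = d 0 ^ 2 * cos t ^ 2 + d 1 ^ 2 * sin t ^ 2 := fun t => by
    simp [w, dotProduct, Fin.sum_univ_two]; ring
  simp only [hw, ssign_apply_mul_ssign_apply_mulVec_of_orthogonal hU, hww]
  have hwc : ∀ k, Continuous fun t => w t k := fun k => by
    fin_cases k <;> simp only [w] <;> fun_prop
  have hcont : ∀ k l, Continuous fun t => w t k * w t l
      / (d 0 ^ 2 * cos t ^ 2 + d 1 ^ 2 * sin t ^ 2) := fun k l =>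
    continuous_div_ellipse (hd 0) (hd 1) ((hwc k).mul (hwc l))
  refine (intervalIntegral.integral_finsetSum fun k _ => ?_).trans ?_
  · exact (continuous_finsetSum _ fun l _ =>
      continuous_const.mul (hcont k l)).intervalIntegrable _ _
  refine (Finset.sum_congr rfl fun k _ =>
    intervalIntegral.integral_finsetSum fun l _ => ?_).trans ?_
  · exact (continuous_const.mul (hcont k l)).intervalIntegrable _ _
  simp only [intervalIntegral.integral_const_mul, w, integral_ellipse_entry (hd 0) (hd 1)]
  simp [Matrix.mul_apply, Fin.sum_univ_two]
  ring

noncomputable def rotationMatrix (t : ℝ) : Matrix (Fin 2) (Fin 2) ℝ :=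
  !![cos t, -sin t; sin t, cos t]

lemma rotationMatrix_transpose_mul_self (t : ℝ) :
    (rotationMatrix t)ᵀ * rotationMatrix t = 1 := by
  ext i j
  fin_cases i <;> fin_cases j <;>
    simp [rotationMatrix, Matrix.mul_apply, Fin.sum_univ_two] <;> nlinarith [sin_sq_add_cos_sq t]

lemma rotationMatrix_mulVec_cos_sin (t φ : ℝ) :
    rotationMatrix t *ᵥ ![cos φ, sin φ] = ![cos (t + φ), sin (t + φ)] := by
  ext k
  fin_cases k <;> simp [rotationMatrix, cos_add, sin_add] <;> ring

@[fun_prop]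
lemma continuous_rotationMatrix : Continuous rotationMatrix := by
  refine continuous_matrix fun i j => ?_
  fin_cases i <;> fin_cases j <;> simp only [rotationMatrix] <;> fun_prop

lemma exists_pos_smul_cos_sin {z : Fin 2 → ℝ} (hz : z ≠ 0) :
    ∃ r : ℝ, 0 < r ∧ ∃ φ, z = r • ![cos φ, sin φ] := by
  set w : ℂ := ⟨z 0, z 1⟩
  have hw : w ≠ 0 := fun h => hz <| by
    ext k; fin_cases k
    exacts [congrArg Complex.re h, congrArg Complex.im h]
  refine ⟨‖w‖, norm_pos_iff.mpr hw, Complex.arg w, ?_⟩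
  ext k; fin_cases k
  · simp [Complex.norm_mul_cos_arg, w]
  · simp [Complex.norm_mul_sin_arg, w]

lemma conj_rotationMatrix_mulVec {A : Matrix (Fin 2) (Fin 2) ℝ} (hA : IsUnit A.det)
    {y : Fin 2 → ℝ} (hy : y ≠ 0) :
    ∃ r : ℝ, 0 < r ∧ ∃ φ, ∀ t,
      (A * rotationMatrix t * A⁻¹) *ᵥ y = r • (A *ᵥ ![cos (t + φ), sin (t + φ)]) := by
  have hz : A⁻¹ *ᵥ y ≠ 0 := fun h => hy <| by
    rw [← one_mulVec y, ← mul_nonsing_inv A hA, ← mulVec_mulVec, h, mulVec_zero]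
  obtain ⟨r, hr, φ, hφ⟩ := exists_pos_smul_cos_sin hz
  refine ⟨r, hr, φ, fun t => ?_⟩
  rw [← mulVec_mulVec, ← mulVec_mulVec, hφ, mulVec_smul, rotationMatrix_mulVec_cos_sin,
    mulVec_smul]

lemma Function.Periodic.intervalIntegral_comp_add_right {f : ℝ → ℝ} {T : ℝ}
    (hf : Function.Periodic f T) (a φ : ℝ) :
    ∫ t in a..a + T, f (t + φ) = ∫ t in a..a + T, f t := by
  rw [intervalIntegral.integral_comp_add_right, add_right_comm, hf.intervalIntegral_add_eq]

lemma integral_ssign_mul_ssign_conj_rotation {U : Matrix (Fin 2) (Fin 2) ℝ} (hU : Uᵀ * U = 1)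
    {d : Fin 2 → ℝ} (hd : ∀ k, 0 < d k) {y : EuclideanSpace ℝ (Fin 2)} (hy : y ≠ 0)
    (i j : Fin 2) :
    ∫ t in (-π)..π,
        ssign (toEuclideanLin (U * diagonal d * rotationMatrix t * (U * diagonal d)⁻¹) y) i
        * ssign (toEuclideanLin (U * diagonal d * rotationMatrix t * (U * diagonal d)⁻¹) y) j
      = 2 * π * (U * diagonal (fun k => d k / (d 0 + d 1)) * Uᵀ) i j := by
  obtain ⟨r, hr, φ, horbit⟩ := conj_rotationMatrix_mulVec
    (isUnit_det_mul_diagonal hU fun k => (hd k).ne') (y := WithLp.ofLp y) (by simpa using hy)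
  set f : ℝ → ℝ := fun s => ssign (WithLp.toLp 2 ((U * diagonal d) *ᵥ ![cos s, sin s])) i
    * ssign (WithLp.toLp 2 ((U * diagonal d) *ᵥ ![cos s, sin s])) j
  have hf : Function.Periodic f (2 * π) := fun s => by simp only [f, cos_add_two_pi, sin_add_two_pi]
  simp only [toLpLin_apply, horbit, WithLp.toLp_smul, ssign_smul_of_pos hr]
  have hshift := hf.intervalIntegral_comp_add_right (-π) φ
  rw [show -π + 2 * π = π by ring] at hshift
  rw [hshift, integral_ssign_mul_ssign_ellipse hU hd]

lemma integral_ssign_mul_ssign_of_withDensity_quadForm (μ : EuclideanSpace ℝ (Fin 2))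
    {U : Matrix (Fin 2) (Fin 2) ℝ} (hU : Uᵀ * U = 1) {d : Fin 2 → ℝ} (hd : ∀ k, 0 < d k)
    {V : Matrix (Fin 2) (Fin 2) ℝ} (hV : V = U * diagonal d * (U * diagonal d)ᵀ)
    (φ : ℝ → ENNReal) {F : Measure (EuclideanSpace ℝ (Fin 2))} [IsProbabilityMeasure F]
    (hF : F = volume.withDensity fun x => φ (∑ i, ∑ j, (x i - μ i) * V⁻¹ i j * (x j - μ j)))
    (i j : Fin 2) :
    ∫ x, ssign (x - μ) i * ssign (x - μ) j ∂F
      = (U * diagonal (fun k => d k / (d 0 + d 1)) * Uᵀ) i j := by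
  subst hV
  set A := U * diagonal d
  set T : ℝ → EuclideanSpace ℝ (Fin 2) → EuclideanSpace ℝ (Fin 2) :=
    fun t x => μ + toEuclideanLin (A * rotationMatrix t * A⁻¹) (x - μ)
  have hT : Continuous fun z : ℝ × EuclideanSpace ℝ (Fin 2) => T z.1 z.2 := by
    simp only [T, toLpLin_apply]
    fun_prop
  have hcoord : ∀ k : Fin 2, Measurable fun x : EuclideanSpace ℝ (Fin 2) => ssign (x - μ) k :=
    fun k => (measurable_pi_apply k).comp ((WithLp.measurable_ofLp 2 _).comp
      (measurable_ssign.comp (measurable_id.sub_const μ)))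
  have hm : (volume.restrict (Set.Ioc (-π) π)).real Set.univ = 2 * π := by
    simp [pi_pos.le, two_mul]
  have hae : ∀ᵐ x ∂F, x ≠ μ := hF ▸
    (withDensity_absolutelyContinuous _ _).ae_le (compl_mem_ae_iff.mpr (measure_singleton μ))
  refine integral_eq_of_map_eq_of_ae_integral_eq (m := volume.restrict (Set.Ioc (-π) π)) (T := T)
    (G := fun x => ssign (x - μ) i * ssign (x - μ) j) (C := 1)
    (fun t => (hT.comp (Continuous.prodMk_right t)).measurable)
    (fun t => hF ▸ map_withDensity_quadForm_conj μ
      (isUnit_det_mul_diagonal hU fun k => (hd k).ne') (rotationMatrix_transpose_mul_self t) φ)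
    ((hcoord i).mul (hcoord j)) (((hcoord i).mul (hcoord j)).comp hT.measurable)
    (fun x => by
      rw [abs_mul]
      exact mul_le_one₀ (abs_ssign_apply_le_one _ _) (abs_nonneg _) (abs_ssign_apply_le_one _ _))
    (hm ▸ by positivity) ?_
  filter_upwards [hae] with x hx
  rw [← intervalIntegral.integral_of_le (by linarith [pi_pos])]
  simp only [T, add_sub_cancel_left]
  rw [integral_ssign_mul_ssign_conj_rotation hU hd (sub_ne_zero.mpr hx), hm]

theorem sscm_eigenvalues_bivariate_general
    (μ : EuclideanSpace ℝ (Fin 2)) (V : Matrix (Fin 2) (Fin 2) ℝ)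
    (g : ℝ → ℝ)
    (F : Measure (EuclideanSpace ℝ (Fin 2))) [IsProbabilityMeasure F]
    (hF : F = volume.withDensity fun x => ENNReal.ofReal
        ((Real.sqrt V.det)⁻¹ * g (∑ i, ∑ j, (x i - μ i) * V⁻¹ i j * (x j - μ j))))
    (U : Matrix (Fin 2) (Fin 2) ℝ) (hU : U * Uᵀ = 1)
    (lam : Fin 2 → ℝ) (hpos : 0 < lam 1) (hord : lam 1 ≤ lam 0)
    (hVdec : V = U * Matrix.diagonal lam * Uᵀ) :
    (Matrix.of fun i j => ∫ x, ssign (x - μ) i * ssign (x - μ) j ∂F)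
      = U * Matrix.diagonal
          (fun j => Real.sqrt (lam j) / (Real.sqrt (lam 0) + Real.sqrt (lam 1))) * Uᵀ := by
  have hlam : ∀ k, 0 < lam k := by
    intro k; fin_cases k
    exacts [hpos.trans_le hord, hpos]
  have hdd : diagonal (fun k => √(lam k)) * diagonal (fun k => √(lam k)) = diagonal lam := by
    rw [diagonal_mul_diagonal]
    congr 1; ext k
    exact mul_self_sqrt (hlam k).le
  ext i j
  refine integral_ssign_mul_ssign_of_withDensity_quadForm μ (mul_eq_one_comm.mp hU)
    (fun k => sqrt_pos.2 (hlam k)) ?_ (fun s => ENNReal.ofReal ((√V.det)⁻¹ * g s)) hF i j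
  rw [hVdec, transpose_mul, diagonal_transpose, ← hdd]
  simp only [Matrix.mul_assoc]

/-- Let F ∈ E₂(μ,V) be a bivariate elliptical distribution with
eigenvalue decomposition V = U Λ Uᵀ, U orthogonal, Λ = diag(λ₁,λ₂), 0 < λ₂ ≤ λ₁.
Then the spatial sign covariance matrix S(F) = E[s(X−μ) s(X−μ)ᵀ] satisfies
S(F) = U Δ Uᵀ with Δ = diag(δ₁,δ₂) and δ_j = √λ_j/(√λ₁ + √λ₂). -/
theorem sscm_eigenvalues_bivariate
    (μ : EuclideanSpace ℝ (Fin 2)) (V : Matrix (Fin 2) (Fin 2) ℝ) (hV : V.PosDef)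
    (g : ℝ → ℝ) (hg : ∀ t, 0 ≤ t → 0 ≤ g t)
    (F : Measure (EuclideanSpace ℝ (Fin 2))) [IsProbabilityMeasure F]
    (hF : F = volume.withDensity fun x => ENNReal.ofReal
        ((Real.sqrt V.det)⁻¹ * g (∑ i, ∑ j, (x i - μ i) * V⁻¹ i j * (x j - μ j))))
    (U : Matrix (Fin 2) (Fin 2) ℝ) (hU : U * Uᵀ = 1)
    (lam : Fin 2 → ℝ) (hpos : 0 < lam 1) (hord : lam 1 ≤ lam 0)
    (hVdec : V = U * Matrix.diagonal lam * Uᵀ) :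
    (Matrix.of fun i j => ∫ x, ssign (x - μ) i * ssign (x - μ) j ∂F)
      = U * Matrix.diagonal
          (fun j => Real.sqrt (lam j) / (Real.sqrt (lam 0) + Real.sqrt (lam 1))) * Uᵀ :=
  sscm_eigenvalues_bivariate_general μ V g F hF U hU lam hpos hord hVdec
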